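/- arXiv:2002.07153 — 2 statements merged into one kernel-verified Lean document; each statement's English description precedes it below -/
import Mathlib

section
/- The compatibility relation is not transitive in general: there exists a deterministic single-outputting p-filter F with states u, v, w such that u is compatible with v and v is compatible with w, but u is not compatible with w. -/
/-- A procrustean filter (p-filter): states `V`, a nonempty set of initial
states, observations `Y`, a transition function `tr : V → V → Set Y`,
an output space `C`, and an output function `out : V → Set C` mapping each
state to a nonempty set of outputs. -/
structure PFilter (V Y C : Type) where
  init : Set V
  init_nonempty : init.Nonempty
  tr : V → V → Set Y
  out : V → Set C
  out_nonempty : ∀ v, (out v).Nonempty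

namespace PFilter

variable {V V' Y C : Type}

/-- `F.Reaches v s u` : the observation string `s` reaches state `u` from `v`. -/
inductive Reaches (F : PFilter V Y C) : V → List Y → V → Prop
  | nil (v : V) : Reaches F v [] v
  | cons {v w u : V} {y : Y} {s : List Y} :
      y ∈ F.tr v w → Reaches F w s u → Reaches F v (y :: s) u

/-- The set of states reached by `s` when traced from state `v`. -/
def reachedFrom (F : PFilter V Y C) (v : V) (s : List Y) : Set V :=
  {u | F.Reaches v s u}

/-- The set of states reached by `s` from some initial state. -/
def reached (F : PFilter V Y C) (s : List Y) : Set V :=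
  {u | ∃ v0 ∈ F.init, F.Reaches v0 s u}

/-- The extensions of a state `v`: strings that do not crash from `v`. -/
def extensions (F : PFilter V Y C) (v : V) : Set (List Y) :=
  {s | ∃ u, F.Reaches v s u}

/-- The interaction language of `F`: extensions of initial states. -/
def language (F : PFilter V Y C) : Set (List Y) :=
  {s | ∃ v0 ∈ F.init, ∃ u, F.Reaches v0 s u}

/-- The filter output for string `s`: union of outputs of states reached by `s`. -/
def outputs (F : PFilter V Y C) (s : List Y) : Set C :=
  ⋃ v ∈ F.reached s, F.out v

/-- `F'` output simulates `F`. -/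
def OutputSimulates (F' : PFilter V' Y C) (F : PFilter V Y C) : Prop :=
  ∀ s ∈ F.language, (F'.outputs s).Nonempty ∧ F'.outputs s ⊆ F.outputs s

/-- `F` is deterministic: one initial state, and outgoing transition labels
from any state are pairwise disjoint. -/
def Deterministic (F : PFilter V Y C) : Prop :=
  (∃ v0, F.init = {v0}) ∧
    ∀ v1 v2 v3 : V, v2 ≠ v3 → F.tr v1 v2 ∩ F.tr v1 v3 = ∅

/-- `F` is single-outputting: every state's output set is a singleton. -/
def SingleOutputting (F : PFilter V Y C) : Prop :=
  ∀ v, ∃ o, F.out v = {o}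

/-- Two states are compatible: they agree on the outputs of all common extensions. -/
def Compatible (F : PFilter V Y C) (v w : V) : Prop :=
  ∀ s ∈ F.extensions v ∩ F.extensions w,
    ∀ v' ∈ F.reachedFrom v s, ∀ w' ∈ F.reachedFrom w s, F.out v' = F.out w'

/-- A set of mutually compatible states (a clique in the compatibility graph). -/
def MutuallyCompatible (F : PFilter V Y C) (U : Set V) : Prop :=
  ∀ v ∈ U, ∀ w ∈ U, F.Compatible v w

/-- A set of states is group compatible: there is a common output on
all their extensions. -/
def GroupCompatible (F : PFilter V Y C) (U : Set V) : Prop :=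
  ∀ s : List Y, (∃ u ∈ U, s ∈ F.extensions u) →
    (⋂ w ∈ {w | ∃ u ∈ U, w ∈ F.reachedFrom u s}, F.out w).Nonempty

/-- A state `v` of `F` corresponds to a state `v'` of `F'` if some string
reaches both from the respective initial states. -/
def Corresponds (F : PFilter V Y C) (F' : PFilter V' Y C) (v : V) (v' : V') : Prop :=
  ∃ s : List Y, v ∈ F.reached s ∧ v' ∈ F'.reached s

/-- `K_{v'}` : the set of states of `F` corresponding to a state `v'` of `F'`. -/
def corrSet (F : PFilter V Y C) (F' : PFilter V' Y C) (v' : V') : Set V :=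
  {v | Corresponds F F' v v'}

/-- The induced cover `Q(F,F') = {K_{v'} : v' ∈ V(F')}`. -/
def inducedCover (F : PFilter V Y C) (F' : PFilter V' Y C) : Set (Set V) :=
  Set.range (corrSet F F')

/-- The relation induced on `V(F)` by an output-simulating filter `F'`. -/
def inducedRel (F : PFilter V Y C) (F' : PFilter V' Y C) (v w : V) : Prop :=
  ∃ v' : V', Corresponds F F' v v' ∧ Corresponds F F' w v'

/-- `(U,W)_y` is a zipper constraint: `U` and `W` are sets of mutually
compatible states and `W` is the set of `y`-successors of `U`. -/
def ZipperConstraint (F : PFilter V Y C) (U W : Set V) (y : Y) : Prop :=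
  F.MutuallyCompatible U ∧ F.MutuallyCompatible W ∧
    W = {w | ∃ u ∈ U, y ∈ F.tr u w}

/-- A collection of sets `K` satisfies the zipper constraints of `F`. -/
def SatisfiesZip (F : PFilter V Y C) (K : Set (Set V)) : Prop :=
  ∀ U W y, F.ZipperConstraint U W y → (∃ S ∈ K, U ⊆ S) → ∃ T ∈ K, W ⊆ T

/-- `K` is a clique cover of the compatibility graph of `F` covering all vertices. -/
def IsCliqueCover (F : PFilter V Y C) (K : Set (Set V)) : Prop :=
  (∀ S ∈ K, F.MutuallyCompatible S) ∧ ⋃₀ K = Set.univ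

/-- `(U,W)_y` is a generalized zipper constraint: `U` and `W` are group
compatible and `W` is the set of `y`-successors of `U`. -/
def GenZipperConstraint (F : PFilter V Y C) (U W : Set V) (y : Y) : Prop :=
  F.GroupCompatible U ∧ F.GroupCompatible W ∧
    W = {w | ∃ u ∈ U, y ∈ F.tr u w}

/-- A collection of sets `K` satisfies the generalized zipper constraints of `F`. -/
def SatisfiesGenZip (F : PFilter V Y C) (K : Set (Set V)) : Prop :=
  ∀ U W y, F.GenZipperConstraint U W y → (∃ S ∈ K, U ⊆ S) → ∃ T ∈ K, W ⊆ T

/-- `K` is a cover of `V(F)` by group-compatible sets. -/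
def IsGroupCover (F : PFilter V Y C) (K : Set (Set V)) : Prop :=
  (∀ S ∈ K, F.GroupCompatible S) ∧ ⋃₀ K = Set.univ

/-- `F'` is an induced filter `M(F,K)`: one state per set of `K`; a state is
initial iff its set contains an initial state; output is the intersection of
the outputs over its set; transitions are inherited, and for each state and
observation only a single edge is kept, going to a set that contains all
successors under that observation. -/
def IsInducedFilter (F : PFilter V Y C) (K : Set (Set V))
    (F' : PFilter {S // S ∈ K} Y C) : Prop :=
  F'.init = {S : {S // S ∈ K} | ∃ v ∈ F.init, v ∈ S.1} ∧
  (∀ S, F'.out S = ⋂ v ∈ S.1, F.out v) ∧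
  (∀ S T (y : Y), y ∈ F'.tr S T → ∃ v ∈ S.1, ∃ w ∈ T.1, y ∈ F.tr v w) ∧
  (∀ S T (y : Y), y ∈ F'.tr S T → ∀ w, (∃ v ∈ S.1, y ∈ F.tr v w) → w ∈ T.1) ∧
  (∀ S (y : Y), (∃ v ∈ S.1, ∃ w, y ∈ F.tr v w) → ∃! T, y ∈ F'.tr S T)

/-- `F'` is the merged filter of `F` under cover `K` *without* the pruning
step: initial states are sets containing an initial state, outputs are the
common outputs of each set, and transitions are fully inherited. -/
def IsMergedFilter (F : PFilter V Y C) (K : Set (Set V))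
    (F' : PFilter {S // S ∈ K} Y C) : Prop :=
  F'.init = {S : {S // S ∈ K} | ∃ v ∈ F.init, v ∈ S.1} ∧
  (∀ S, F'.out S = ⋂ v ∈ S.1, F.out v) ∧
  (∀ S T, F'.tr S T = ⋃ v ∈ S.1, ⋃ w ∈ T.1, F.tr v w)

end PFilter

/-!
A state without outgoing transitions has only the empty string as an extension, so it is
compatible with every state that has the same output. Placing such a dead end `v` between two
states `u` and `w` that have the same output but split on a common observation into states with
different outputs breaks transitivity.
-/

namespace PFilter

variable {V Y C : Type} {F : PFilter V Y C}

theorem reaches_nil_iff {v u : V} : F.Reaches v [] u ↔ v = u := by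
  constructor
  · rintro ⟨⟩
    rfl
  · rintro rfl
    exact .nil v

theorem Compatible.symm {u v : V} (h : F.Compatible u v) : F.Compatible v u :=
  fun s hs v' hv' u' hu' => (h s ⟨hs.2, hs.1⟩ u' hu' v' hv').symm

theorem eq_nil_of_mem_extensions {v : V} (hv : ∀ x, F.tr v x = ∅) {s : List Y}
    (hs : s ∈ F.extensions v) : s = [] := by
  obtain ⟨u, hu⟩ := hs
  cases hu with
  | nil => rfl
  | cons hy _ => simp [hv] at hy

theorem compatible_of_tr_eq_empty {u v : V} (hv : ∀ x, F.tr v x = ∅) (h : F.out u = F.out v) :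
    F.Compatible u v := by
  rintro s ⟨-, hs⟩ u' hu' v' hv'
  obtain rfl := eq_nil_of_mem_extensions hv hs
  rwa [← reaches_nil_iff.mp hu', ← reaches_nil_iff.mp hv']

theorem not_compatible_of_reaches {u w u' w' : V} {s : List Y} (hu : F.Reaches u s u')
    (hw : F.Reaches w s w') (h : F.out u' ≠ F.out w') : ¬ F.Compatible u w :=
  fun hc => h (hc s ⟨⟨u', hu⟩, ⟨w', hw⟩⟩ u' hu w' hw)

theorem deterministic_of_subsingleton_succ {v₀ : V} (h₀ : F.init = {v₀})
    (h : ∀ v x x', (F.tr v x).Nonempty → (F.tr v x').Nonempty → x = x') : F.Deterministic :=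
  ⟨⟨v₀, h₀⟩, fun v x x' hne => Set.eq_empty_of_forall_notMem fun _ hy =>
    hne (h v x x' ⟨_, hy.1⟩ ⟨_, hy.2⟩)⟩

end PFilter

open PFilter

/-- States `0`, `1`, `2` play `u`, `v`, `w`; `1` is a dead end, and the edges `0 → 3` and
`2 → 4` lead to outputs `false` and `true`. -/
def deadEndFilter : PFilter (Fin 5) Unit Bool where
  init := {0}
  init_nonempty := Set.singleton_nonempty 0
  tr i j := {_y | i = 0 ∧ j = 3 ∨ i = 2 ∧ j = 4}
  out v := {decide (v = 4)}
  out_nonempty _ := Set.singleton_nonempty _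

theorem deadEndFilter_tr_nonempty_iff {i j : Fin 5} :
    (deadEndFilter.tr i j).Nonempty ↔ i = 0 ∧ j = 3 ∨ i = 2 ∧ j = 4 := by
  simp [deadEndFilter, Set.nonempty_def]

theorem deadEndFilter_tr_one (j : Fin 5) : deadEndFilter.tr 1 j = ∅ :=
  Set.not_nonempty_iff_eq_empty.mp (by simp [deadEndFilter_tr_nonempty_iff])

theorem deadEndFilter_reaches_zero : deadEndFilter.Reaches 0 [()] 3 :=
  .cons (Or.inl ⟨rfl, rfl⟩) (.nil 3)

theorem deadEndFilter_reaches_two : deadEndFilter.Reaches 2 [()] 4 :=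
  .cons (Or.inr ⟨rfl, rfl⟩) (.nil 4)

/-- The compatibility relation is not transitive in general. -/
theorem compatible_not_transitive :
    ∃ (V Y C : Type) (_ : Finite V) (F : PFilter V Y C) (u v w : V),
      F.Deterministic ∧ F.SingleOutputting ∧
      F.Compatible u v ∧ F.Compatible v w ∧ ¬ F.Compatible u w := by
  refine ⟨Fin 5, Unit, Bool, inferInstance, deadEndFilter, 0, 1, 2, ?_, fun v => ⟨_, rfl⟩,
    compatible_of_tr_eq_empty deadEndFilter_tr_one rfl,
    (compatible_of_tr_eq_empty (u := 2) deadEndFilter_tr_one rfl).symm,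
    not_compatible_of_reaches deadEndFilter_reaches_zero deadEndFilter_reaches_two
      (by simp [deadEndFilter])⟩
  refine deterministic_of_subsingleton_succ rfl fun v x x' hx hx' => ?_
  rw [deadEndFilter_tr_nonempty_iff] at hx hx'
  omega
end

section
/- Let F and F' be deterministic p-filters with F single-outputting, and suppose F' output simulates F. Then for every state v' of F', any two states of F that correspond to v' are compatible; that is, each correspondence set K_{v'} is a clique in the compatibility graph of F. -/
/-!
If `v` and `w` are reached in `F` by strings `s₁` and `s₂` that both lead the
deterministic filter `F'` to `v'`, then for any common extension `s` the strings
`s₁ ++ s` and `s₂ ++ s` lead `F'` to the same states, hence give the same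
(nonempty) output in `F'`. Output simulation puts that output inside the outputs of
`F` on `s₁ ++ s` and on `s₂ ++ s`, which by determinism are the singleton outputs of
the unique states reached by `s` from `v` and from `w`; so these agree.
-/

namespace PFilter

variable {V Y C : Type} {F : PFilter V Y C}

theorem Reaches.append {v u x : V} {s t : List Y} (h₁ : F.Reaches v s u)
    (h₂ : F.Reaches u t x) : F.Reaches v (s ++ t) x := by
  induction h₁ with
  | nil => exact h₂
  | cons hy _ ih => exact .cons hy (ih h₂)

theorem Reaches.of_append {v x : V} {s t : List Y} (h : F.Reaches v (s ++ t) x) :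
    ∃ u, F.Reaches v s u ∧ F.Reaches u t x := by
  induction s generalizing v with
  | nil => exact ⟨v, .nil v, h⟩
  | cons y s ih =>
    obtain _ | ⟨hy, h⟩ := h
    obtain ⟨u, hvu, hux⟩ := ih h
    exact ⟨u, .cons hy hvu, hux⟩

theorem reached_append (s t : List Y) :
    F.reached (s ++ t) = ⋃ u ∈ F.reached s, F.reachedFrom u t := by
  ext x
  simp only [reached, reachedFrom, Set.mem_iUnion, Set.mem_ofPred_eq, exists_prop]
  constructor
  · rintro ⟨v₀, h₀, h⟩
    obtain ⟨u, hu, hux⟩ := h.of_append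
    exact ⟨u, ⟨v₀, h₀, hu⟩, hux⟩
  · rintro ⟨u, ⟨v₀, h₀, hu⟩, hux⟩
    exact ⟨v₀, h₀, hu.append hux⟩

theorem mem_reached_append {s t : List Y} {v u : V} (hv : v ∈ F.reached s)
    (hu : u ∈ F.reachedFrom v t) : u ∈ F.reached (s ++ t) :=
  reached_append s t ▸ Set.mem_biUnion hv hu

theorem mem_language_of_mem_reached {s : List Y} {u : V} (hu : u ∈ F.reached s) :
    s ∈ F.language :=
  let ⟨v₀, h₀, h⟩ := hu
  ⟨v₀, h₀, u, h⟩

namespace Deterministic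

variable (hdet : F.Deterministic)
include hdet

theorem eq_of_mem_tr {v w₁ w₂ : V} {y : Y} (h₁ : y ∈ F.tr v w₁) (h₂ : y ∈ F.tr v w₂) :
    w₁ = w₂ := by
  by_contra hne
  have hempty := hdet.2 v w₁ w₂ hne
  exact hempty.subset ⟨h₁, h₂⟩

theorem reachedFrom_subsingleton (v : V) (s : List Y) :
    (F.reachedFrom v s).Subsingleton := by
  intro u₁ h₁ u₂ h₂
  induction (h₁ : F.Reaches v s u₁) generalizing u₂ with
  | nil => cases h₂; rfl
  | cons hy _ ih =>
    obtain _ | ⟨hy', h₂⟩ := h₂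
    cases hdet.eq_of_mem_tr hy hy'
    exact ih h₂

theorem reached_subsingleton (s : List Y) : (F.reached s).Subsingleton := by
  obtain ⟨a, ha⟩ := hdet.1
  rintro u₁ ⟨v₁, hv₁, h₁⟩ u₂ ⟨v₂, hv₂, h₂⟩
  rw [ha, Set.mem_singleton_iff] at hv₁ hv₂
  subst hv₁ hv₂
  exact hdet.reachedFrom_subsingleton _ s h₁ h₂

theorem reached_append_of_mem {s : List Y} {v : V} (hv : v ∈ F.reached s) (t : List Y) :
    F.reached (s ++ t) = F.reachedFrom v t := by
  rw [reached_append, (hdet.reached_subsingleton s).eq_singleton_of_mem hv,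
    Set.biUnion_singleton]

theorem outputs_append_of_mem {s : List Y} {v : V} (hv : v ∈ F.reached s) (t : List Y) :
    F.outputs (s ++ t) = ⋃ u ∈ F.reachedFrom v t, F.out u := by
  rw [outputs, hdet.reached_append_of_mem hv]

theorem outputs_append_of_reachedFrom {s t : List Y} {v u : V} (hv : v ∈ F.reached s)
    (hu : u ∈ F.reachedFrom v t) : F.outputs (s ++ t) = F.out u := by
  rw [hdet.outputs_append_of_mem hv,
    (hdet.reachedFrom_subsingleton v t).eq_singleton_of_mem hu, Set.biUnion_singleton]

end Deterministic

theorem SingleOutputting.out_eq_of_inter_nonempty (hso : F.SingleOutputting) {v w : V}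
    (h : (F.out v ∩ F.out w).Nonempty) : F.out v = F.out w := by
  obtain ⟨a, ha⟩ := hso v
  obtain ⟨b, hb⟩ := hso w
  obtain ⟨c, hcv, hcw⟩ := h
  rw [ha] at hcv ⊢
  rw [hb] at hcw ⊢
  rw [hcv.symm.trans hcw]

end PFilter

theorem corrSet_mutuallyCompatible_general {V V' Y C : Type}
    (F : PFilter V Y C) (F' : PFilter V' Y C)
    (hdet : F.Deterministic) (hdet' : F'.Deterministic)
    (hso : F.SingleOutputting) (hsim : F'.OutputSimulates F) (v' : V') :
    ∀ v ∈ PFilter.corrSet F F' v', ∀ w ∈ PFilter.corrSet F F' v',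
      F.Compatible v w := by
  rintro v ⟨s₁, hv, hv'₁⟩ w ⟨s₂, hw, hv'₂⟩ s - v₂ hv₂ w₂ hw₂
  have hF₁ := hdet.outputs_append_of_reachedFrom hv hv₂
  have hF₂ := hdet.outputs_append_of_reachedFrom hw hw₂
  have hF' : F'.outputs (s₁ ++ s) = F'.outputs (s₂ ++ s) := by
    rw [hdet'.outputs_append_of_mem hv'₁, hdet'.outputs_append_of_mem hv'₂]
  obtain ⟨hne, hsub₁⟩ :=
    hsim _ (PFilter.mem_language_of_mem_reached (PFilter.mem_reached_append hv hv₂))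
  obtain ⟨-, hsub₂⟩ :=
    hsim _ (PFilter.mem_language_of_mem_reached (PFilter.mem_reached_append hw hw₂))
  apply hso.out_eq_of_inter_nonempty
  obtain ⟨c, hc⟩ := hne
  exact ⟨c, hF₁ ▸ hsub₁ hc, hF₂ ▸ hsub₂ (hF' ▸ hc)⟩

/-- Each correspondence set is a clique in the compatibility
graph: any two states of `F` corresponding to a common state of `F'` are
compatible. -/
theorem corrSet_mutuallyCompatible {V V' Y C : Type} [Finite V] [Finite V']
    (F : PFilter V Y C) (F' : PFilter V' Y C)
    (hdet : F.Deterministic) (hdet' : F'.Deterministic)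
    (hso : F.SingleOutputting) (hsim : F'.OutputSimulates F) (v' : V') :
    ∀ v ∈ PFilter.corrSet F F' v', ∀ w ∈ PFilter.corrSet F F' v',
      F.Compatible v w :=
  corrSet_mutuallyCompatible_general F F' hdet hdet' hso hsim v'
end
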